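/- Suppose (K_dl, (K_{s,ul})_s, (p_s)_s, (τ_s)_s) is a feasible point of the rigid problem (P_rig) with K' = K − a·θ > 0 that additionally satisfies the uplink ordering constraint for the permutation σ: for all 1 ≤ s < s' ≤ S, D/(K_dl·B·log(1 + P_d·γ_{σ(s)})) + τ_{σ(s)} ≤ D/(K_dl·B·log(1 + P_d·γ_{σ(s')})) + τ_{σ(s')}. Then the session-based problem (P_σ), whose constraints (16), (18), (19), (20), (21), (22), (24') are listed in the context, is feasible. -/

import Mathlib

open Real Finset

/-- A feasible point of the rigid problem `(P_rig)` with resource budget `K'`. -/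
def RigidFeasible (S : ℕ) (D B Pd Pmax κ K' : ℝ)
    (γ E α τmin : Fin S → ℝ)
    (Kdl : ℝ) (Kul p τ : Fin S → ℝ) : Prop :=
  0 < Kdl ∧ Kdl ≤ K' ∧
  (∀ s, 0 < Kul s) ∧
  (∀ s, 0 < p s ∧ p s ≤ Pmax) ∧
  (∀ s, τmin s ≤ τ s) ∧
  (∑ s, Kul s) ≤ K' ∧
  (∀ s s' : Fin S,
    D / (Kdl * B * Real.log (1 + Pd * γ s)) + τ s ≥
      D / (Kdl * B * Real.log (1 + Pd * γ s'))) ∧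
  (∀ s, κ * (α s) ^ 3 / (τ s) ^ 2 +
      p s * D / (Kul s * B * Real.log (1 + p s * γ s / Kul s)) ≤ E s)

/-- Feasibility of the session-based problem `(P_σ)`: indices are 0-based,
rank `j : Fin S` corresponds to the `(j+1)`-th session of the paper, and
`σ j` is the user starting its uplink transmission at session `j`. -/
def SessionFeasible (S : ℕ) (σ : Equiv.Perm (Fin S))
    (D B Pd Pmax κ K a θ : ℝ)
    (γ E α τmin : Fin S → ℝ) : Prop :=
  ∃ (tdl tul : Fin S → ℝ) (Tidle : ℝ)
    (Kdl KdlHB KulHB : Fin S → ℝ)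
    (Kul pul : Fin S → Fin S → ℝ),
    (∀ ℓ', 0 ≤ tdl ℓ') ∧ (∀ ℓ, 0 ≤ tul ℓ) ∧ 0 ≤ Tidle ∧
    (∀ ℓ', 0 ≤ Kdl ℓ') ∧ (∀ ℓ', 0 ≤ KdlHB ℓ') ∧ (∀ ℓ, 0 ≤ KulHB ℓ) ∧
    (∀ j ℓ : Fin S, j ≤ ℓ →
      0 ≤ Kul (σ j) ℓ ∧ 0 ≤ pul (σ j) ℓ ∧ pul (σ j) ℓ ≤ Pmax) ∧
    -- (16) computation-time lower bound
    (∀ j : Fin S,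
      (∑ ℓ ∈ Finset.Iio j, tul ℓ) + (∑ ℓ' ∈ Finset.Ioi (σ j), tdl ℓ') + Tidle
        ≥ τmin (σ j)) ∧
    -- (18) downlink completion
    (∀ m : Fin S,
      (∑ i ∈ Finset.Iic m, Kdl i * B * Real.log (1 + Pd * γ m) * tdl i) ≥ D) ∧
    -- (19) downlink resource-block sharing
    (∀ m : Fin S, Kdl m + KdlHB m ≤ K) ∧
    -- (20) uplink completion
    (∀ j : Fin S,
      (∑ ℓ ∈ Finset.Ici j,
        (Kul (σ j) ℓ * B *
          Real.log (1 + pul (σ j) ℓ * γ (σ j) / Kul (σ j) ℓ)) * tul ℓ) ≥ D) ∧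
    -- (21) uplink resource-block sharing
    (∀ ℓ : Fin S,
      (∑ j ∈ Finset.Iic ℓ, Kul (σ j) ℓ) + KulHB ℓ ≤ K) ∧
    -- (22) energy budget
    (∀ j : Fin S,
      (∑ ℓ ∈ Finset.Ici j, pul (σ j) ℓ * tul ℓ) +
        κ * (α (σ j)) ^ 3 /
          ((∑ ℓ ∈ Finset.Iio j, tul ℓ) +
            (∑ ℓ' ∈ Finset.Ioi (σ j), tdl ℓ') + Tidle) ^ 2
        ≤ E (σ j)) ∧
    -- (24') high-bandwidth traffic requirement
    ((∑ ℓ', KdlHB ℓ' * tdl ℓ') + (∑ ℓ, KulHB ℓ * tul ℓ) + K * Tidle ≥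
      a * θ * ((∑ ℓ', tdl ℓ') + Tidle + (∑ ℓ, tul ℓ)))

/-!
Run the rigid solution sequentially instead of overlapped. Every downlink session lasts as long as
all rigid downlink transmissions together, so each user has its model after its own session;
uplink session `ℓ` is reserved for user `σ ℓ`, which transmits with its rigid blocks and power for
exactly its rigid uplink time; and the idle period lasts as long as all rigid computation times
together. Then every user computes at least as long as in the rigid solution, so its energy only
decreases, and high-bandwidth traffic gets `a·θ` blocks in every session and all `K` blocks while
idle, which is what the rigid budget `K' = K − a·θ` leaves room for.
-/

namespace SessionSchedule

variable {S : ℕ}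

theorem mul_log_one_add_pos {k B x : ℝ} (hk : 0 < k) (hB : 0 < B) (hx : 0 < x) :
    0 < k * B * log (1 + x) :=
  mul_pos (mul_pos hk hB) (log_pos (by linarith))

theorem le_sum_Iic_mul_sum_div {D : ℝ} (hD : 0 ≤ D) {c : Fin S → ℝ} (hc : ∀ m, 0 < c m)
    (m : Fin S) : D ≤ ∑ _i ∈ Iic m, c m * ∑ i, D / c i :=
  calc D ≤ c m * ∑ i, D / c i := by
        rw [mul_comm, ← div_le_iff₀ (hc m)]
        exact single_le_sum (fun i _ => div_nonneg hD (hc i).le) (mem_univ m)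
    _ ≤ ∑ _i ∈ Iic m, c m * ∑ i, D / c i := by
        rw [sum_const, Fin.card_Iic, nsmul_eq_mul]
        exact le_mul_of_one_le_left (mul_nonneg (hc m).le (sum_nonneg fun i _ =>
          div_nonneg hD (hc i).le)) (by simp)

theorem add_div_sq_le_of_le {c e τ T E : ℝ} (hc : 0 ≤ c) (hτ : 0 < τ) (hT : τ ≤ T)
    (hE : c / τ ^ 2 + e ≤ E) : e + c / T ^ 2 ≤ E := by
  have := div_le_div_of_nonneg_left hc (by positivity) (pow_le_pow_left₀ hτ.le hT 2)
  linarith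

theorem le_sum_Iio_add_sum_Ioi_add_sum {x y z : Fin S → ℝ} (hx : 0 ≤ x) (hy : 0 ≤ y)
    (hz : 0 ≤ z) (j k : Fin S) : z k ≤ ∑ ℓ ∈ Iio j, x ℓ + ∑ ℓ ∈ Ioi k, y ℓ + ∑ s, z s := by
  have := single_le_sum (fun s _ => hz s) (mem_univ k)
  have := sum_nonneg fun ℓ (_ : ℓ ∈ Iio j) => hx ℓ
  have := sum_nonneg fun ℓ (_ : ℓ ∈ Ioi k) => hy ℓ
  linarith

theorem mul_sum_add_add_sum_le {ι : Type*} (s : Finset ι) (t u : ι → ℝ) {q K T : ℝ} (hqK : q ≤ K)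
    (hT : 0 ≤ T) :
    q * (∑ i ∈ s, t i + T + ∑ i ∈ s, u i) ≤ ∑ i ∈ s, q * t i + ∑ i ∈ s, q * u i + K * T := by
  rw [← mul_sum, ← mul_sum]
  nlinarith

def reservedAlloc (σ : Equiv.Perm (Fin S)) (x : Fin S → ℝ) (u ℓ : Fin S) : ℝ :=
  if u = σ ℓ then x u else 0

variable {σ : Equiv.Perm (Fin S)}

theorem reservedAlloc_nonneg {x : Fin S → ℝ} (hx : ∀ u, 0 ≤ x u) (u ℓ : Fin S) :
    0 ≤ reservedAlloc σ x u ℓ := by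
  unfold reservedAlloc
  split_ifs
  exacts [hx u, le_rfl]

theorem reservedAlloc_le {x : Fin S → ℝ} {c : ℝ} (hx : ∀ u, x u ≤ c) (hc : 0 ≤ c) (u ℓ : Fin S) :
    reservedAlloc σ x u ℓ ≤ c := by
  unfold reservedAlloc
  split_ifs
  exacts [hx u, hc]

theorem sum_Iic_reservedAlloc (x : Fin S → ℝ) (ℓ : Fin S) :
    ∑ j ∈ Iic ℓ, reservedAlloc σ x (σ j) ℓ = x (σ ℓ) := by
  simp [reservedAlloc, σ.injective.eq_iff]

theorem sum_Ici_reservedAlloc (f : ℝ → ℝ → Fin S → ℝ) (hf : ∀ ℓ, f 0 0 ℓ = 0)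
    (k p : Fin S → ℝ) (j : Fin S) :
    ∑ ℓ ∈ Ici j, f (reservedAlloc σ k (σ j) ℓ) (reservedAlloc σ p (σ j) ℓ) ℓ =
      f (k (σ j)) (p (σ j)) j := by
  rw [sum_eq_single_of_mem j (mem_Ici.2 le_rfl)]
  · simp [reservedAlloc]
  · intro ℓ _ hℓ
    simp [reservedAlloc, σ.injective.eq_iff, Ne.symm hℓ, hf]

end SessionSchedule

open SessionSchedule in
theorem rigid_ordered_feasible_implies_session_feasible_general
    (S : ℕ) (σ : Equiv.Perm (Fin S))
    (D B Pd Pmax κ K a θ : ℝ)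
    (γ E α τmin : Fin S → ℝ)
    (hD : 0 < D) (hB : 0 < B) (hPd : 0 < Pd)
    (hκ : 0 < κ) (ha : 0 < a) (hθ : 0 < θ)
    (hγ : ∀ s, 0 < γ s)
    (hα : ∀ s, 0 < α s) (hτmin : ∀ s, 0 < τmin s)
    (Kdl : ℝ) (Kul p τ : Fin S → ℝ)
    (hfeas : RigidFeasible S D B Pd Pmax κ (K - a * θ) γ E α τmin Kdl Kul p τ) :
    SessionFeasible S σ D B Pd Pmax κ K a θ γ E α τmin := by
  obtain ⟨hKdl, hKdlK, hKul, hp, hτ, hKulsum, -, hEnergy⟩ := hfeas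
  have hdl m : 0 < Kdl * B * log (1 + Pd * γ m) :=
    mul_log_one_add_pos hKdl hB (mul_pos hPd (hγ m))
  have hul s : 0 < Kul s * B * log (1 + p s * γ s / Kul s) :=
    mul_log_one_add_pos (hKul s) hB (div_pos (mul_pos (hp s).1 (hγ s)) (hKul s))
  have hτpos s : 0 < τ s := (hτmin s).trans_le (hτ s)
  have haθ : 0 ≤ a * θ := (mul_pos ha hθ).le
  set tdl := ∑ m, D / (Kdl * B * log (1 + Pd * γ m))
  set tul := fun ℓ => D / (Kul (σ ℓ) * B * log (1 + p (σ ℓ) * γ (σ ℓ) / Kul (σ ℓ)))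
  have htdl : 0 ≤ tdl := sum_nonneg fun m _ => (div_pos hD (hdl m)).le
  have htul : 0 ≤ tul := fun ℓ => (div_pos hD (hul (σ ℓ))).le
  have hTidle : 0 ≤ ∑ s, τ s := sum_nonneg fun s _ => (hτpos s).le
  have hcomp j :=
    le_sum_Iio_add_sum_Ioi_add_sum htul (fun _ => htdl) (fun s => (hτpos s).le) j (σ j)
  refine ⟨fun _ => tdl, tul, ∑ s, τ s, fun _ => Kdl, fun _ => a * θ, fun _ => a * θ,
    reservedAlloc σ Kul, reservedAlloc σ p, fun _ => htdl, htul, hTidle,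
    fun _ => hKdl.le, fun _ => haθ, fun _ => haθ,
    fun j _ _ => ⟨reservedAlloc_nonneg (fun u => (hKul u).le) _ _,
      reservedAlloc_nonneg (fun u => (hp u).1.le) _ _,
      reservedAlloc_le (fun u => (hp u).2) ((hp (σ j)).1.le.trans (hp (σ j)).2) _ _⟩,
    fun j => (hτ (σ j)).trans (hcomp j), le_sum_Iic_mul_sum_div hD.le hdl,
    fun _ => by linarith, fun j => ?_, fun ℓ => ?_, fun j => ?_,
    mul_sum_add_add_sum_le univ _ tul (by linarith) hTidle⟩
  · rw [sum_Ici_reservedAlloc (fun k q ℓ => k * B * log (1 + q * γ (σ j) / k) * tul ℓ)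
      (by simp)]
    exact (mul_div_cancel₀ D (hul (σ j)).ne').ge
  · rw [sum_Iic_reservedAlloc]
    linarith [single_le_sum (fun s _ => (hKul s).le) (mem_univ (σ ℓ))]
  · rw [sum_Ici_reservedAlloc (fun _ q ℓ => q * tul ℓ) (by simp) Kul]
    have hE := hEnergy (σ j)
    rw [mul_div_assoc (p (σ j))] at hE
    exact add_div_sq_le_of_le (mul_pos hκ (pow_pos (hα _) 3)).le (hτpos _) (hcomp j) hE

/-- A feasible point of the rigid problem with budget `K' = K − a·θ > 0` that
satisfies the uplink ordering constraint for `σ` yields feasibility of the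
session-based problem `(P_σ)`. -/
theorem rigid_ordered_feasible_implies_session_feasible
    (S : ℕ) (hS : 1 ≤ S) (σ : Equiv.Perm (Fin S))
    (D B Pd Pmax κ K a θ : ℝ)
    (γ E α τmin : Fin S → ℝ)
    (hD : 0 < D) (hB : 0 < B) (hPd : 0 < Pd) (hPmax : 0 < Pmax)
    (hκ : 0 < κ) (hK : 0 < K) (ha : 0 < a) (hθ : 0 < θ)
    (hK' : 0 < K - a * θ)
    (hγ : ∀ s, 0 < γ s) (hE : ∀ s, 0 < E s)
    (hα : ∀ s, 0 < α s) (hτmin : ∀ s, 0 < τmin s)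
    (Kdl : ℝ) (Kul p τ : Fin S → ℝ)
    (hfeas : RigidFeasible S D B Pd Pmax κ (K - a * θ) γ E α τmin Kdl Kul p τ)
    (horder : ∀ j j' : Fin S, j < j' →
      D / (Kdl * B * Real.log (1 + Pd * γ (σ j))) + τ (σ j) ≤
        D / (Kdl * B * Real.log (1 + Pd * γ (σ j'))) + τ (σ j')) :
    SessionFeasible S σ D B Pd Pmax κ K a θ γ E α τmin :=
  rigid_ordered_feasible_implies_session_feasible_general S σ D B Pd Pmax κ K a θ γ E α τmin hD hB
    hPd hκ ha hθ hγ hα hτmin Kdl Kul p τ hfeas
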